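/- arXiv:2510.07479 — 4 statements merged into one kernel-verified Lean document; each statement's English description precedes it below -/
import Mathlib

section
/- Let f : D → F be a function between finite sets. Let y be uniformly distributed on F, let x_u be uniformly distributed on D, and let x be sampled by: given y, if f⁻¹(y) is nonempty pick x uniformly in f⁻¹(y), otherwise set x = ⊥ (a symbol not in D). Then the statistical distance between x and x_u equals the statistical distance between y and f(x_u). -/
/-!
Conditioned on `y = a`, the sampled `x` is uniform on the fibre `f⁻¹(a)`, and `x_u` is uniform on
`D`, so both distributions are uniform on each fibre. Hence on the fibre over `a` the pointwise
differences `|P(x = d) - P(x_u = d)|` are all equal to `|P(y = a) - P(f(x_u) = a)| / |f⁻¹(a)|` and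
add up to `|P(y = a) - P(f(x_u) = a)|`, while the mass of `⊥` is exactly the contribution of the
points `a` outside the image of `f`, where `P(f(x_u) = a) = 0`.
-/

open Finset

section Fibres

variable {D F : Type*} [Fintype D] [DecidableEq F] (f : D → F)

theorem sum_comp_div_card_fiber (g : F → ℝ) :
    ∑ d, g (f d) / #{d' | f d' = f d} = ∑ a ∈ univ.image f, g a := by
  refine (sum_image' _ fun d _ => ?_).symm
  have hfib : ∀ j ∈ ({d' | f d' = f d} : Finset D),
      g (f j) / #{d' | f d' = f j} = g (f d) / #{d' | f d' = f d} := by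
    intro j hj
    rw [(mem_filter.mp hj).2]
  have hpos : (0 : ℝ) < #{d' | f d' = f d} := by
    exact_mod_cast card_pos.mpr ⟨d, by simp⟩
  rw [sum_congr rfl hfib, sum_const, nsmul_eq_mul, mul_div_cancel₀ _ hpos.ne']

theorem card_fiber_eq_zero_of_notMem_image {a : F} (ha : a ∉ univ.image f) :
    #{d | f d = a} = 0 := by
  rw [card_eq_zero, filter_eq_empty_iff]
  exact fun d _ hd => ha (mem_image.mpr ⟨d, mem_univ d, hd⟩)

end Fibres

theorem stmt_0_general {D F : Type*} [Fintype D] [Fintype F] [DecidableEq F]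
    (f : D → F)
    (px pxu : Option D → ℝ) (py pfxu : F → ℝ)
    (hpx_none : px none =
      ((Fintype.card F - (Finset.univ.image f).card : ℕ) : ℝ) / Fintype.card F)
    (hpx_some : ∀ d : D, px (some d) =
      (1 / (Fintype.card F : ℝ)) *
        (1 / ((Finset.univ.filter (fun d' : D => f d' = f d)).card : ℝ)))
    (hpxu_none : pxu none = 0)
    (hpxu_some : ∀ d : D, pxu (some d) = 1 / (Fintype.card D : ℝ))
    (hpy : ∀ a : F, py a = 1 / (Fintype.card F : ℝ))
    (hpfxu : ∀ a : F, pfxu a =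
      ((Finset.univ.filter (fun d : D => f d = a)).card : ℝ) / Fintype.card D) :
    (1 / 2) * ∑ o : Option D, |px o - pxu o|
      = (1 / 2) * ∑ a : F, |py a - pfxu a| := by
  have h_on_image : ∀ d, |px (some d) - pxu (some d)| =
      |py (f d) - pfxu (f d)| / #{d' | f d' = f d} := by
    intro d
    have hpos : (0 : ℝ) < #{d' | f d' = f d} := by
      exact_mod_cast card_pos.mpr ⟨d, by simp⟩
    rw [← abs_of_pos hpos, ← abs_div, hpx_some, hpxu_some, hpy, hpfxu]
    congr 1
    field_simp
  have h_off_image : ∀ a ∈ (univ.image f)ᶜ, |py a - pfxu a| = 1 / Fintype.card F := by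
    intro a ha
    rw [hpy, hpfxu, card_fiber_eq_zero_of_notMem_image f (mem_compl.mp ha), Nat.cast_zero,
      zero_div, sub_zero, abs_of_nonneg (by positivity)]
  have h_bot : |px none - pxu none| = ∑ a ∈ (univ.image f)ᶜ, |py a - pfxu a| := by
    rw [sum_congr rfl h_off_image, sum_const, card_compl, nsmul_eq_mul, hpx_none, hpxu_none,
      sub_zero, abs_of_nonneg (by positivity), mul_one_div]
  rw [Fintype.sum_option, h_bot, Fintype.sum_congr _ _ h_on_image,
    sum_comp_div_card_fiber f fun a => |py a - pfxu a|, sum_compl_add_sum]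

/-- Let `f : D → F` be a function between finite sets. Let `y` be uniform
on `F`, `x_u` uniform on `D`, and let `x` be sampled by: draw `y` uniformly, and if
`f⁻¹(y)` is nonempty pick `x` uniformly in it, else output `⊥` (modeled by `none`).
Then `Δ(x, x_u) = Δ(y, f(x_u))`. -/
theorem stmt_0 {D F : Type*} [Fintype D] [Fintype F] [DecidableEq F]
    [Nonempty D] [Nonempty F] (f : D → F)
    (px pxu : Option D → ℝ) (py pfxu : F → ℝ)
    (hpx_none : px none =
      ((Fintype.card F - (Finset.univ.image f).card : ℕ) : ℝ) / Fintype.card F)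
    (hpx_some : ∀ d : D, px (some d) =
      (1 / (Fintype.card F : ℝ)) *
        (1 / ((Finset.univ.filter (fun d' : D => f d' = f d)).card : ℝ)))
    (hpxu_none : pxu none = 0)
    (hpxu_some : ∀ d : D, pxu (some d) = 1 / (Fintype.card D : ℝ))
    (hpy : ∀ a : F, py a = 1 / (Fintype.card F : ℝ))
    (hpfxu : ∀ a : F, pfxu a =
      ((Finset.univ.filter (fun d : D => f d = a)).card : ℝ) / Fintype.card D) :
    (1 / 2) * ∑ o : Option D, |px o - pxu o|
      = (1 / 2) * ∑ a : F, |py a - pfxu a| :=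
  stmt_0_general f px pxu py pfxu hpx_none hpx_some hpxu_none hpxu_some hpy hpfxu
end

section
/- Let Gab(g, κ) = {(P(g_1), …, P(g_n)) : P a q-polynomial of q-degree < κ} ⊆ F_{q^m}^n where g_1, …, g_n ∈ F_{q^m} are F_q-linearly independent and κ ≤ n ≤ m. Then Gab(g, κ) is an F_{q^m}-linear subspace of F_{q^m}^n of F_{q^m}-dimension κ. -/
/-!
The code is the image of `L^κ` under the Moore matrix `(g_j ^ q ^ i)`, so it suffices that this
matrix has trivial kernel. If `P = ∑ c_i X^(q^i)` vanishes at every `g_j`, then, since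
`x ↦ x^q` is `K`-linear on `L`, it vanishes on the whole `K`-span of the `g_j`, which has `q^n`
elements. As `deg P < q^κ ≤ q^n`, `P = 0`, and its coefficients `c_i` are all zero.
-/

open Polynomial Matrix

section qPolynomial

variable {L : Type*} [Field L] {κ : ℕ}

noncomputable def qPolynomial (q : ℕ) (c : Fin κ → L) : L[X] :=
  ∑ i : Fin κ, C (c i) * X ^ q ^ (i : ℕ)

theorem eval_qPolynomial (q : ℕ) (c : Fin κ → L) (x : L) :
    (qPolynomial q c).eval x = ∑ i : Fin κ, c i * x ^ q ^ (i : ℕ) := by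
  simp [qPolynomial, eval_finsetSum]

theorem coeff_qPolynomial_pow {q : ℕ} (hq : 1 < q) (c : Fin κ → L) (i : Fin κ) :
    (qPolynomial q c).coeff (q ^ (i : ℕ)) = c i := by
  rw [qPolynomial, finsetSum_coeff, Finset.sum_eq_single i]
  · simp
  · intro j _ hji
    rw [coeff_C_mul, coeff_X_pow, if_neg, mul_zero]
    exact fun h => hji (Fin.ext (Nat.pow_right_injective hq h)).symm
  · simp

theorem natDegree_qPolynomial_lt {q : ℕ} (hq : 1 < q) (c : Fin κ → L) :
    (qPolynomial q c).natDegree < q ^ κ := by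
  have hdeg : (qPolynomial q c).natDegree ≤ q ^ κ - 1 := by
    refine natDegree_sum_le_of_forall_le _ _ fun i _ => (natDegree_C_mul_le _ _).trans ?_
    rw [natDegree_X_pow]
    have := Nat.pow_lt_pow_right hq i.2
    omega
  have := Nat.pow_pos (n := κ) (zero_lt_one.trans hq)
  omega

theorem eq_zero_of_qPolynomial_eq_zero {q : ℕ} (hq : 1 < q) {c : Fin κ → L}
    (hc : qPolynomial q c = 0) : c = 0 := by
  funext i
  rw [← coeff_qPolynomial_pow hq c i, hc, coeff_zero, Pi.zero_apply]

end qPolynomial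

section FiniteField

variable (K : Type*) {L : Type*} [Field K] [Fintype K] [Field L] [Algebra K L] {κ : ℕ}

noncomputable def qPolynomialEval (c : Fin κ → L) : L →ₗ[K] L :=
  ∑ i : Fin κ, c i • (FiniteField.frobeniusAlgHom K L).toLinearMap ^ (i : ℕ)

theorem qPolynomialEval_apply (c : Fin κ → L) (x : L) :
    qPolynomialEval K c x = (qPolynomial (Fintype.card K) c).eval x := by
  simp [qPolynomialEval, eval_qPolynomial, Module.End.pow_apply,
    FiniteField.coe_frobeniusAlgHom, pow_iterate]

variable {K}

theorem eq_zero_of_qPolynomialEval_eq_zero {ι : Type*} [Fintype ι] {g : ι → L}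
    (hg : LinearIndependent K g) (hκ : κ ≤ Fintype.card ι) {c : Fin κ → L}
    (hc : ∀ j, qPolynomialEval K c (g j) = 0) : c = 0 := by
  classical
  have hroot (a : ι → K) : (qPolynomial (Fintype.card K) c).eval
      (Fintype.linearCombination K g a) = 0 := by
    simp [← qPolynomialEval_apply, Fintype.linearCombination_apply, hc]
  refine eq_zero_of_qPolynomial_eq_zero Fintype.one_lt_card <|
    eq_zero_of_natDegree_lt_card_of_eval_eq_zero _ hg.fintypeLinearCombination_injective hroot ?_
  rw [Fintype.card_fun]
  exact (natDegree_qPolynomial_lt Fintype.one_lt_card c).trans_le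
    (Nat.pow_le_pow_right Fintype.card_pos hκ)

def mooreMatrix {ι : Type*} (q : ℕ) (g : ι → L) (κ : ℕ) : Matrix ι (Fin κ) L :=
  of fun j i => g j ^ q ^ (i : ℕ)

theorem mulVec_mooreMatrix {ι : Type*} (g : ι → L) (c : Fin κ → L) (j : ι) :
    (mooreMatrix (Fintype.card K) g κ *ᵥ c) j = qPolynomialEval K c (g j) := by
  simp [mooreMatrix, mulVec, dotProduct, qPolynomialEval_apply, eval_qPolynomial, mul_comm]

theorem mulVec_mooreMatrix_injective {ι : Type*} [Fintype ι] {g : ι → L}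
    (hg : LinearIndependent K g) (hκ : κ ≤ Fintype.card ι) :
    Function.Injective (mooreMatrix (Fintype.card K) g κ).mulVec := by
  rw [← coe_mulVecLin, ← LinearMap.ker_eq_bot, LinearMap.ker_eq_bot']
  intro c hc
  refine eq_zero_of_qPolynomialEval_eq_zero hg hκ fun j => ?_
  rw [← mulVec_mooreMatrix, ← mulVecLin_apply, hc, Pi.zero_apply]

end FiniteField

theorem stmt_4_general {K L : Type*} [Field K] [Fintype K] [Field L] [Algebra K L]
    (q n κ : ℕ) (hq : q = Fintype.card K)
    (hκn : κ ≤ n)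
    (g : Fin n → L) (hg : LinearIndependent K g) :
    ∃ W : Submodule L (Fin n → L),
      (W : Set (Fin n → L)) =
        {c | ∃ p : Fin κ → L, c = fun j => ∑ i : Fin κ, p i * g j ^ q ^ (i : ℕ)} ∧
      Module.finrank L W = κ := by
  subst hq
  let M := mooreMatrix (Fintype.card K) g κ
  refine ⟨LinearMap.range M.mulVecLin, ?_, ?_⟩
  · ext v
    refine exists_congr fun p => ?_
    rw [eq_comm, funext_iff, funext_iff]
    refine forall_congr' fun j => ?_
    simp [M, mooreMatrix, mulVec, dotProduct, mul_comm]
  · have hκ : κ ≤ Fintype.card (Fin n) := (Fintype.card_fin n).symm ▸ hκn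
    rw [LinearMap.finrank_range_of_inj (mulVec_mooreMatrix_injective hg hκ),
      Module.finrank_fin_fun]

/-- With `q = #F_q`, `m = [L : F_q]`, `g₁,…,g_n ∈ L = F_{q^m}`
`F_q`-linearly independent, and `κ ≤ n ≤ m`, the Gabidulin code
`Gab(g,κ) = {(P(g₁),…,P(g_n)) : P a q-polynomial of q-degree < κ}` is an `L`-linear
subspace of `L^n` of `L`-dimension `κ`. -/
theorem stmt_4 {K L : Type*} [Field K] [Fintype K] [Field L] [Algebra K L]
    (q m n κ : ℕ) (hq : q = Fintype.card K) (hm : m = Module.finrank K L)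
    (hκn : κ ≤ n) (hnm : n ≤ m)
    (g : Fin n → L) (hg : LinearIndependent K g) :
    ∃ W : Submodule L (Fin n → L),
      (W : Set (Fin n → L)) =
        {c | ∃ p : Fin κ → L, c = fun j => ∑ i : Fin κ, p i * g j ^ q ^ (i : ℕ)} ∧
      Module.finrank L W = κ :=
  stmt_4_general q n κ hq hκn g hg
end

section
/- Let F be a family of [m×n,k]_q matrix codes of minimum rank distance ≥ d and let t < d/2. Let C_s ⊕ A be a random AddRemove code (C_s a subcode of codimension ℓ_s of a random code in F, A random of dimension ℓ_a with trivial intersection), let (B_i)_{i=1}^{mn−k+ℓ_s−ℓ_a} be a random basis of its dual, and let X, Y be independent uniform on the rank-metric ball B_t of radius t. Then P[(tr(X B_i^⊤))_i = (tr(Y B_i^⊤))_i] = (1/q^{mn−k+ℓ_s−ℓ_a}) · (1 + O(q^{mn−k+ℓ_s−ℓ_a}/#B_t)). -/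
/-!
For `X ≠ Y` in the ball `B_t`, `Z = X - Y` is nonzero of rank `≤ 2t < d`, so `Z ∉ C_s` and its
syndrome `(tr (Z δⱼᵀ))ⱼ` with respect to a basis `δ` of `C_s^⊥` is nonzero. As the law of `δ` is
invariant under `GL_M(K)` (`M = mn - k + ℓ_s`), so is the law of this syndrome; since `GL_M(K)` acts
transitively on `K^M ∖ 0`, the syndrome is uniform there, and the public part (its first
`M - ℓ_a` coordinates) vanishes with probability `ρ = (q^ℓ_a - 1) / (q^M - 1)`. Summing over pairs,
the collision probability is `(b + (b² - b) ρ) / b²` with `b = #B_t`. The full syndrome is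
injective on `B_t`, so `b ≤ q^M`, and then `|(b + (b² - b) ρ) / b² - q^(ℓ_a - M)| ≤ 1 / b`.
-/

open Matrix

def dualCode {K : Type*} [Field K] {m n : ℕ}
    (W : Submodule K (Matrix (Fin m) (Fin n) K)) :
    Submodule K (Matrix (Fin m) (Fin n) K) where
  carrier := {B | ∀ C ∈ W, Matrix.trace (C * Bᵀ) = 0}
  add_mem' := by
    intro a b ha hb C hC
    simp [Matrix.transpose_add, Matrix.mul_add, ha C hC, hb C hC]
  zero_mem' := by intro C hC; simp
  smul_mem' := by
    intro c a ha C hC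
    simp [Matrix.transpose_smul, Matrix.mul_smul, ha C hC]

theorem Finset.sum_eq_card_sub_one_mul {A : Type*} [DecidableEq A] {s : Finset A} {a : A}
    (ha : a ∈ s) {g : A → ℝ} {c : ℝ} (hga : g a = 0) (hg : ∀ x ∈ s, x ≠ a → g x = c) :
    ∑ x ∈ s, g x = (s.card - 1 : ℝ) * c := by
  rw [← Finset.add_sum_erase s g ha, hga, zero_add,
    Finset.sum_congr rfl fun x hx => hg x (Finset.mem_of_mem_erase hx) (Finset.ne_of_mem_erase hx),
    Finset.sum_const, Finset.card_erase_of_mem ha, nsmul_eq_mul,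
    Nat.cast_sub (Finset.card_pos.2 ⟨a, ha⟩)]
  push_cast
  ring

theorem abs_collision_sub_le {q b : ℝ} {M ℓa : ℕ} (hq : 1 ≤ q) (hℓa : ℓa ≤ M) (hb : 1 ≤ b)
    (hbq : b ≤ q ^ M) :
    |(b + (b ^ 2 - b) * ((q ^ ℓa - 1) / (q ^ M - 1))) / b ^ 2 - 1 / q ^ (M - ℓa)| ≤ 1 / b := by
  have hR : 1 ≤ q ^ ℓa := one_le_pow₀ hq
  have hRQ : q ^ ℓa ≤ q ^ M := pow_le_pow_right₀ hq hℓa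
  have hpow : 1 / q ^ (M - ℓa) = q ^ ℓa / q ^ M := by
    rw [div_eq_div_iff (by positivity) (by positivity), one_mul, ← pow_add,
      Nat.add_sub_cancel' hℓa]
  rw [hpow]
  generalize q ^ ℓa = R at hR hRQ ⊢
  generalize q ^ M = Q at hbq hRQ ⊢
  rcases (hR.trans hRQ).eq_or_lt with hQ | hQ
  · -- `q ^ M = 1` forces `b = 1`, and `ρ` is the junk value `0 / 0`
    obtain rfl : Q = 1 := hQ.symm
    obtain rfl : R = 1 := le_antisymm hRQ hR
    obtain rfl : b = 1 := le_antisymm hbq hb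
    norm_num
  set ρ := (R - 1) / (Q - 1)
  have hρ1 : ρ ≤ 1 := div_le_one_of_le₀ (by linarith) (by linarith)
  have hgap : R / Q - ρ = (Q - R) / (Q * (Q - 1)) := by
    rw [div_sub_div _ _ (by linarith) (by linarith)]
    ring
  have hgap0 : 0 ≤ R / Q - ρ := hgap ▸ div_nonneg (by linarith) (by nlinarith)
  have hgap1 : R / Q - ρ ≤ 1 / b := by
    calc R / Q - ρ ≤ 1 / Q := by
          rw [hgap, div_le_div_iff₀ (by nlinarith) (by linarith)]
          nlinarith
      _ ≤ 1 / b := one_div_le_one_div_of_le (by linarith) hbq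
  have hsplit : (b + (b ^ 2 - b) * ρ) / b ^ 2 - R / Q = (1 - ρ) / b - (R / Q - ρ) := by
    field_simp
    ring
  have hdiag0 : 0 ≤ (1 - ρ) / b := div_nonneg (by linarith) (by linarith)
  have hdiag1 : (1 - ρ) / b ≤ 1 / b := by
    gcongr
    exact sub_le_self 1 (div_nonneg (by linarith) (by linarith))
  rw [hsplit, abs_le]
  constructor <;> linarith

theorem sum_mul_natCard_collisions {ι α : Type*} [Fintype ι] [Fintype α] [DecidableEq α]
    {p : ι → ℝ} (hp : ∑ i, p i = 1) (B : α → Prop) [DecidablePred B]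
    (R : ι → α × α → Prop) [∀ i, DecidablePred (R i)] (hR : ∀ i x, R i (x, x)) {ρ : ℝ}
    (hρ : ∀ x y, B x → B y → x ≠ y → ∑ i, p i * (if R i (x, y) then 1 else 0) = ρ) :
    ∑ i, p i * (Nat.card {xy : α × α // B xy.1 ∧ B xy.2 ∧ R i xy} : ℝ)
      = Nat.card {x // B x} + ((Nat.card {x // B x} : ℝ) ^ 2 - Nat.card {x // B x}) * ρ := by
  have hpair : ∀ x y, ∑ i, p i * (if B x ∧ B y ∧ R i (x, y) then 1 else 0)
      = (if B x then 1 else 0) * ((if B y then 1 else 0) * ρ + if x = y then 1 - ρ else 0) := by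
    intro x y
    by_cases hx : B x; swap
    · simp [hx]
    by_cases hxy : x = y
    · subst hxy
      simp [hx, hR, hp]
    by_cases hy : B y; swap
    · simp [hy, hxy]
    simpa [hx, hy, hxy] using hρ x y hx hy hxy
  calc ∑ i, p i * (Nat.card {xy : α × α // B xy.1 ∧ B xy.2 ∧ R i xy} : ℝ)
      = ∑ x, ∑ y, ∑ i, p i * (if B x ∧ B y ∧ R i (x, y) then 1 else 0) := by
        simp_rw [Nat.card_eq_fintype_card, Fintype.card_subtype, Finset.natCast_card_filter,
          Fintype.sum_prod_type, Finset.mul_sum]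
        rw [Finset.sum_comm]
        exact Finset.sum_congr rfl fun x _ => Finset.sum_comm
    _ = (∑ x, if B x then 1 else 0) * ((∑ y, if B y then 1 else 0) * ρ + (1 - ρ)) := by
        simp_rw [hpair, ← Finset.mul_sum, Finset.sum_add_distrib, ← Finset.sum_mul,
          Finset.sum_ite_eq, Finset.mem_univ, if_true, ← Finset.sum_mul]
    _ = _ := by
        rw [Nat.card_eq_fintype_card, Fintype.card_subtype, Finset.natCast_card_filter]
        ring

namespace Matrix

theorem rank_sub_le {K m n : Type*} [Field K] [Finite m] [Fintype n] (A B : Matrix m n K) :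
    (A - B).rank ≤ A.rank + B.rank :=
  calc (A - B).rank
      ≤ Module.finrank K ↥(LinearMap.range A.mulVecLin ⊔ LinearMap.range B.mulVecLin) := by
        refine Submodule.finrank_mono ?_
        rintro _ ⟨x, rfl⟩
        rw [mulVecLin_apply, sub_mulVec]
        exact Submodule.sub_mem _ (Submodule.mem_sup_left ⟨x, rfl⟩)
          (Submodule.mem_sup_right ⟨x, rfl⟩)
    _ ≤ A.rank + B.rank := Submodule.finrank_add_le_finrank_add_finrank _ _

variable {K : Type*} [Field K] {m n : Type*} [Fintype m] [Fintype n]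

def traceForm : LinearMap.BilinForm K (Matrix m n K) :=
  LinearMap.mk₂ K (fun A B => trace (A * Bᵀ))
    (fun A A' B => by rw [Matrix.add_mul, trace_add])
    (fun c A B => by rw [Matrix.smul_mul, trace_smul])
    (fun A B B' => by rw [transpose_add, Matrix.mul_add, trace_add])
    (fun c A B => by rw [transpose_smul, Matrix.mul_smul, trace_smul])

theorem traceForm_apply (A B : Matrix m n K) : traceForm A B = trace (A * Bᵀ) := rfl

theorem traceForm_comm (A B : Matrix m n K) : traceForm A B = traceForm B A := by
  rw [traceForm_apply, ← trace_transpose, transpose_mul, transpose_transpose, traceForm_apply]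

theorem traceForm_isRefl : (traceForm : LinearMap.BilinForm K (Matrix m n K)).IsRefl :=
  fun A B h => by rwa [traceForm_comm]

theorem traceForm_nondegenerate [DecidableEq m] [DecidableEq n] :
    (traceForm : LinearMap.BilinForm K (Matrix m n K)).Nondegenerate := by
  have hsep : LinearMap.SeparatingLeft (traceForm : LinearMap.BilinForm K (Matrix m n K)) := by
    intro A hA
    ext i j
    simpa [traceForm_apply, transpose_single, trace_mul_single] using hA (single i j 1)
  exact ⟨hsep, fun B hB => hsep B fun A => by rw [traceForm_comm]; exact hB A⟩

end Matrix

section DualCode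

variable {K : Type*} [Field K] {m n : ℕ}

theorem dualCode_eq_orthogonal (W : Submodule K (Matrix (Fin m) (Fin n) K)) :
    dualCode W = traceForm.orthogonal W := rfl

theorem dualCode_dualCode (W : Submodule K (Matrix (Fin m) (Fin n) K)) :
    dualCode (dualCode W) = W := by
  simp only [dualCode_eq_orthogonal]
  exact LinearMap.BilinForm.orthogonal_orthogonal traceForm_nondegenerate traceForm_isRefl W

variable {ι : Type*}

def syndrome (δ : ι → Matrix (Fin m) (Fin n) K) (X : Matrix (Fin m) (Fin n) K) : ι → K :=
  fun j => trace (X * (δ j)ᵀ)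

theorem syndrome_sub (δ : ι → Matrix (Fin m) (Fin n) K) (X Y : Matrix (Fin m) (Fin n) K) :
    syndrome δ (X - Y) = syndrome δ X - syndrome δ Y := by
  ext j
  simp [syndrome, Matrix.sub_mul]

theorem syndrome_eq_zero_iff {W : Submodule K (Matrix (Fin m) (Fin n) K)}
    {δ : ι → Matrix (Fin m) (Fin n) K} (hδ : Submodule.span K (Set.range δ) = dualCode W)
    {Z : Matrix (Fin m) (Fin n) K} : syndrome δ Z = 0 ↔ Z ∈ W := by
  have hmem : ∀ j, δ j ∈ dualCode W := fun j => hδ ▸ Submodule.subset_span ⟨j, rfl⟩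
  refine ⟨fun hZ => ?_, fun hZ => funext fun j => hmem j Z hZ⟩
  rw [← dualCode_dualCode W, ← hδ]
  intro C hC
  have hker : Submodule.span K (Set.range δ) ≤ LinearMap.ker (traceForm Z) := by
    rw [Submodule.span_le]
    rintro _ ⟨j, rfl⟩
    exact congrFun hZ j
  rw [← traceForm_apply, traceForm_comm]
  exact hker hC

theorem syndrome_ne_zero_of_rank_lt {d : ℕ} {C Cs : Submodule K (Matrix (Fin m) (Fin n) K)}
    (hC : ∀ X ∈ C, X ≠ 0 → d ≤ X.rank) (hCs : Cs ≤ C) {δ : ι → Matrix (Fin m) (Fin n) K}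
    (hδ : Submodule.span K (Set.range δ) = dualCode Cs) {Z : Matrix (Fin m) (Fin n) K}
    (hZ : Z ≠ 0) (hZd : Z.rank < d) : syndrome δ Z ≠ 0 := fun h =>
  (hC Z (hCs ((syndrome_eq_zero_iff hδ).1 h)) hZ).not_gt hZd

theorem natCard_rank_le_le_card_pow [Fintype K] [Fintype ι] {t : ℕ}
    {δ : ι → Matrix (Fin m) (Fin n) K}
    (hδ : ∀ Z : Matrix (Fin m) (Fin n) K, Z ≠ 0 → Z.rank ≤ 2 * t → syndrome δ Z ≠ 0) :
    Nat.card {X : Matrix (Fin m) (Fin n) K // X.rank ≤ t} ≤ Fintype.card K ^ Fintype.card ι := by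
  have hinj : Function.Injective
      fun X : {X : Matrix (Fin m) (Fin n) K // X.rank ≤ t} => syndrome δ X.1 := by
    rintro ⟨X, hX⟩ ⟨Y, hY⟩ hXY
    by_contra hne
    refine hδ (X - Y) (sub_ne_zero.2 fun h => hne (Subtype.ext h)) ?_ ?_
    · have := rank_sub_le X Y; omega
    · rw [syndrome_sub]; exact sub_eq_zero.2 hXY
  have := Nat.card_le_card_of_injective _ hinj
  rwa [Nat.card_fun, Nat.card_eq_fintype_card (α := K), Nat.card_eq_fintype_card (α := ι)] at this

end DualCode

theorem card_filter_forall_castLE_eq_zero {K : Type*} [Field K] [Fintype K] [DecidableEq K]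
    {M N : ℕ} (h : N ≤ M) :
    (Finset.univ.filter fun w : Fin M → K => ∀ i : Fin N, w (Fin.castLE h i) = 0).card =
      Fintype.card K ^ (M - N) := by
  set π := LinearMap.funLeft K K (Fin.castLE h)
  have hsurj : Function.Surjective π :=
    LinearMap.funLeft_surjective_of_injective _ _ _ (Fin.castLE_injective h)
  have hker : Module.finrank K (LinearMap.ker π) = M - N := by
    have := LinearMap.finrank_range_add_finrank_ker π
    rw [LinearMap.range_eq_top.2 hsurj, finrank_top, Module.finrank_fin_fun,
      Module.finrank_fin_fun] at this
    omega
  rw [← Fintype.card_subtype, ← Nat.card_eq_fintype_card, ← hker, ← Nat.card_eq_fintype_card,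
    ← Module.natCard_eq_pow_finrank]
  exact Nat.card_congr (Equiv.subtypeEquivRight fun w => by simp [π, funext_iff])

section Frame

variable {K V ι : Type*} [Field K] [AddCommGroup V] [Module K V] [Fintype ι]

def frameMul (δ : ι → V) (T : Matrix ι ι K) : ι → V := fun j => ∑ i, T i j • δ i

theorem frameMul_frameMul (δ : ι → V) (S T : Matrix ι ι K) :
    frameMul (frameMul δ S) T = frameMul δ (S * T) := by
  funext j
  simp only [frameMul, Finset.smul_sum, smul_smul, Matrix.mul_apply, Finset.sum_smul]
  rw [Finset.sum_comm]
  exact Finset.sum_congr rfl fun l _ => Finset.sum_congr rfl fun i _ => by rw [mul_comm]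

theorem frameMul_one [DecidableEq ι] (δ : ι → V) : frameMul δ (1 : Matrix ι ι K) = δ := by
  funext j
  simp [frameMul, Matrix.one_apply, ite_smul]

theorem comp_frameMul (f : V →ₗ[K] K) (δ : ι → V) (T : Matrix ι ι K) :
    f ∘ frameMul δ T = (f ∘ δ) ᵥ* T := by
  funext j
  simp [frameMul, vecMul, dotProduct, mul_comm]

noncomputable def frameMulEquiv [DecidableEq ι] {T : Matrix ι ι K} (hT : IsUnit T.det) :
    (ι → V) ≃ (ι → V) where
  toFun δ := frameMul δ T
  invFun δ := frameMul δ T⁻¹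
  left_inv δ := by
    change frameMul (frameMul δ T) T⁻¹ = δ
    rw [frameMul_frameMul, mul_nonsing_inv T hT, frameMul_one]
  right_inv δ := by
    change frameMul (frameMul δ T⁻¹) T = δ
    rw [frameMul_frameMul, nonsing_inv_mul T hT, frameMul_one]

theorem exists_isUnit_det_vecMul_eq [DecidableEq ι] {v w : ι → K} (hv : v ≠ 0) (hw : w ≠ 0) :
    ∃ T : Matrix ι ι K, IsUnit T.det ∧ v ᵥ* T = w := by
  obtain ⟨g, hg⟩ := Submodule.exists_linearEquiv_restrict_eq
    ((LinearEquiv.toSpanNonzeroSingleton K _ v hv).symm.trans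
      (LinearEquiv.toSpanNonzeroSingleton K _ w hw))
  refine ⟨(LinearMap.toMatrix' g.toLinearMap)ᵀ, ?_, ?_⟩
  · rw [det_transpose, LinearMap.det_toMatrix']
    exact g.isUnit_det'
  · rw [vecMul_transpose, ← toLin'_apply, toLin'_toMatrix']
    have := hg ⟨v, Submodule.mem_span_singleton_self v⟩
    simpa [LinearEquiv.coord_self] using this.symm

end Frame

section Uniform

variable {K V ι : Type*} [Field K] [DecidableEq K] [AddCommGroup V] [Module K V]
  [Fintype V] [Fintype ι] [DecidableEq ι] {p : (ι → V) → ℝ} {f : V →ₗ[K] K}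

theorem sum_mul_ite_comp_vecMul_eq
    (hinv : ∀ T : Matrix ι ι K, IsUnit T.det → ∀ δ, p (fun j => ∑ i, T i j • δ i) = p δ)
    {T : Matrix ι ι K} (hT : IsUnit T.det) (w : ι → K) :
    ∑ δ, p δ * (if f ∘ δ = w ᵥ* T then 1 else 0) = ∑ δ, p δ * (if f ∘ δ = w then 1 else 0) := by
  have hinj : Function.Injective (· ᵥ* T) :=
    vecMul_injective_iff_isUnit.2 ((isUnit_iff_isUnit_det T).2 hT)
  rw [← (frameMulEquiv hT).sum_comp]
  refine Fintype.sum_congr _ _ fun δ => ?_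
  change p (frameMul δ T) * (if f ∘ frameMul δ T = w ᵥ* T then 1 else 0) = _
  simp only [comp_frameMul, hinj.eq_iff]
  exact congrArg (· * _) (hinv T hT δ)

theorem sum_mul_ite_comp_eq_zero (hf : ∀ δ, p δ ≠ 0 → f ∘ δ ≠ 0) :
    ∑ δ, p δ * (if f ∘ δ = 0 then 1 else 0) = 0 :=
  Finset.sum_eq_zero fun δ _ => by
    by_cases hδ : p δ = 0
    · rw [hδ, zero_mul]
    · rw [if_neg (hf δ hδ), mul_zero]

theorem sum_mul_ite_comp_eq_inv [Fintype K] (hp : ∑ δ, p δ = 1)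
    (hinv : ∀ T : Matrix ι ι K, IsUnit T.det → ∀ δ, p (fun j => ∑ i, T i j • δ i) = p δ)
    (hf : ∀ δ, p δ ≠ 0 → f ∘ δ ≠ 0) {w : ι → K} (hw : w ≠ 0) :
    ∑ δ, p δ * (if f ∘ δ = w then 1 else 0) =
      ((Fintype.card K : ℝ) ^ Fintype.card ι - 1)⁻¹ := by
  -- The law of `f ∘ δ` puts no mass on `0` and is invariant under `GL_ι(K)`, which acts
  -- transitively on the nonzero vectors; so it is uniform on them.
  have htotal : ∑ w', ∑ δ, p δ * (if f ∘ δ = w' then 1 else 0) = 1 := by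
    rw [Finset.sum_comm]
    simp [hp]
  rw [Finset.sum_eq_card_sub_one_mul (Finset.mem_univ 0) (sum_mul_ite_comp_eq_zero hf)
    fun w' _ hw' => ?_, Finset.card_univ, Fintype.card_fun] at htotal
  · push_cast at htotal
    exact eq_inv_of_mul_eq_one_right htotal
  · obtain ⟨T, hT, rfl⟩ := exists_isUnit_det_vecMul_eq hw hw'
    exact sum_mul_ite_comp_vecMul_eq hinv hT w

theorem sum_mul_ite_comp_mem_eq [Fintype K] (hp : ∑ δ, p δ = 1)
    (hinv : ∀ T : Matrix ι ι K, IsUnit T.det → ∀ δ, p (fun j => ∑ i, T i j • δ i) = p δ)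
    (hf : ∀ δ, p δ ≠ 0 → f ∘ δ ≠ 0) {S : Finset (ι → K)} (hS : 0 ∈ S) :
    ∑ δ, p δ * (if f ∘ δ ∈ S then 1 else 0) =
      (S.card - 1 : ℝ) / ((Fintype.card K : ℝ) ^ Fintype.card ι - 1) := by
  calc ∑ δ, p δ * (if f ∘ δ ∈ S then 1 else 0)
      = ∑ w ∈ S, ∑ δ, p δ * (if f ∘ δ = w then 1 else 0) := by
        rw [Finset.sum_comm]
        simp only [← Finset.mul_sum, Finset.sum_ite_eq]
    _ = _ := by
      rw [Finset.sum_eq_card_sub_one_mul hS (sum_mul_ite_comp_eq_zero hf)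
        fun w _ hw => sum_mul_ite_comp_eq_inv hp hinv hf hw, div_eq_mul_inv]

end Uniform

theorem sum_mul_ite_trace_castLE_eq {K : Type*} [Field K] [Fintype K] [DecidableEq K] {m n : ℕ}
    {M ℓa : ℕ} (hℓa : ℓa ≤ M) {p : (Fin M → Matrix (Fin m) (Fin n) K) → ℝ}
    (hp : ∑ δ, p δ = 1)
    (hinv : ∀ T : Matrix (Fin M) (Fin M) K, IsUnit T.det →
      ∀ δ, p (fun j => ∑ i, T i j • δ i) = p δ)
    {X Y : Matrix (Fin m) (Fin n) K} (hXY : ∀ δ, p δ ≠ 0 → syndrome δ (X - Y) ≠ 0) :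
    ∑ δ, p δ * (if ∀ i : Fin (M - ℓa),
        trace (X * (δ (Fin.castLE (Nat.sub_le M ℓa) i))ᵀ)
          = trace (Y * (δ (Fin.castLE (Nat.sub_le M ℓa) i))ᵀ) then 1 else 0)
      = ((Fintype.card K : ℝ) ^ ℓa - 1) / ((Fintype.card K : ℝ) ^ M - 1) := by
  set S := Finset.univ.filter fun w : Fin M → K =>
    ∀ i : Fin (M - ℓa), w (Fin.castLE (Nat.sub_le M ℓa) i) = 0
  have key := sum_mul_ite_comp_mem_eq (f := traceForm (X - Y)) hp hinv hXY
    (S := S) (by simp [S])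
  rw [card_filter_forall_castLE_eq_zero, Nat.sub_sub_self hℓa, Fintype.card_fin] at key
  push_cast at key
  rw [← key]
  refine Fintype.sum_congr _ _ fun δ => congrArg (p δ * ·) (if_congr ?_ rfl rfl)
  simp [S, traceForm_apply, sub_eq_zero]

/-- there is an absolute constant `c > 0` such that the following holds.
Let `F` be a family of `[m×n,k]_q` matrix codes of minimum rank distance `≥ d`, let
`t < d/2`, let the public dual basis be the first `mn−k+ℓ_s−ℓ_a` vectors of a random
basis `δ` of `C_s^⊥` (`C_s` a codimension-`ℓ_s` subcode of a random code of `F`), the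
distribution of `δ` being invariant under `GL_{mn−k+ℓ_s}(F_q)`, and let `X, Y` be
independent and uniform on the rank-metric ball `B_t`. Then the collision probability
`P[(tr(X B_iᵀ))_i = (tr(Y B_iᵀ))_i]` equals `q^{-(mn−k+ℓ_s−ℓ_a)} (1 + O(q^{mn−k+ℓ_s−ℓ_a}/#B_t))`,
i.e. `|P − q^{-(mn−k+ℓ_s−ℓ_a)}| ≤ c / #B_t`. -/
theorem stmt_13 :
    ∃ c : ℝ, 0 < c ∧
      ∀ (K : Type) [Field K] [Fintype K] [DecidableEq K],
      ∀ (q m n k ℓs ℓa d t : ℕ), q = Fintype.card K → 2 * t < d →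
      ℓs ≤ k → k ≤ m * n → ℓa ≤ m * n - k + ℓs →
      ∀ (F : Set (Submodule K (Matrix (Fin m) (Fin n) K))),
      (∀ C ∈ F, Module.finrank K C = k) →
      (∀ C ∈ F, ∀ X ∈ C, X ≠ 0 → d ≤ X.rank) →
      ∀ (p : (Fin (m * n - k + ℓs) → Matrix (Fin m) (Fin n) K) → ℝ),
      (∀ δ, 0 ≤ p δ) → (∑ δ, p δ = 1) →
      (∀ δ, p δ ≠ 0 → ∃ C ∈ F, ∃ Cs : Submodule K (Matrix (Fin m) (Fin n) K),
        Cs ≤ C ∧ Module.finrank K Cs = k - ℓs ∧ LinearIndependent K δ ∧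
        Submodule.span K (Set.range δ) = dualCode Cs) →
      (∀ T : Matrix (Fin (m * n - k + ℓs)) (Fin (m * n - k + ℓs)) K, IsUnit T.det →
        ∀ δ, p (fun j => ∑ i, T i j • δ i) = p δ) →
      |(∑ δ, p δ *
          ((Nat.card {XY : Matrix (Fin m) (Fin n) K × Matrix (Fin m) (Fin n) K //
              XY.1.rank ≤ t ∧ XY.2.rank ≤ t ∧
              ∀ i : Fin (m * n - k + ℓs - ℓa),
                Matrix.trace (XY.1 * (δ (Fin.castLE (Nat.sub_le _ ℓa) i))ᵀ)
                  = Matrix.trace (XY.2 * (δ (Fin.castLE (Nat.sub_le _ ℓa) i))ᵀ)} : ℝ)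
            / ((Nat.card {X : Matrix (Fin m) (Fin n) K // X.rank ≤ t} : ℝ)) ^ 2))
        - 1 / (q : ℝ) ^ (m * n - k + ℓs - ℓa)|
      ≤ c / (Nat.card {X : Matrix (Fin m) (Fin n) K // X.rank ≤ t} : ℝ) := by
  refine ⟨1, one_pos, ?_⟩
  intro K _ _ _ q m n k ℓs ℓa d t hq hdt _ _ hℓa F _ hF p _ hp hsupp hinv
  subst hq
  have hsyndrome : ∀ δ, p δ ≠ 0 → ∀ Z : Matrix (Fin m) (Fin n) K, Z ≠ 0 → Z.rank ≤ 2 * t →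
      syndrome δ Z ≠ 0 := by
    intro δ hδ Z hZ hZt
    obtain ⟨C, hC, Cs, hCs, -, -, hspan⟩ := hsupp δ hδ
    exact syndrome_ne_zero_of_rank_lt (hF C hC) hCs hspan hZ (hZt.trans_lt hdt)
  obtain ⟨δ₀, hδ₀⟩ : ∃ δ, p δ ≠ 0 := by
    by_contra! h
    simp [h] at hp
  have hb : 1 ≤ Nat.card {X : Matrix (Fin m) (Fin n) K // X.rank ≤ t} :=
    Nat.one_le_iff_ne_zero.2 (Nat.card_ne_zero.2 ⟨⟨⟨0, by simp⟩⟩, inferInstance⟩)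
  have hbq := natCard_rank_le_le_card_pow (hsyndrome δ₀ hδ₀)
  rw [Fintype.card_fin] at hbq
  simp_rw [← mul_div_assoc]
  rw [← Finset.sum_div,
    sum_mul_natCard_collisions hp (fun X : Matrix (Fin m) (Fin n) K => X.rank ≤ t) _
      (fun _ _ _ => rfl) fun X Y hX hY hXY => sum_mul_ite_trace_castLE_eq hℓa hp hinv
        fun δ hδ => hsyndrome δ hδ (X - Y) (sub_ne_zero.2 hXY) (by grw [rank_sub_le]; omega)]
  exact abs_collision_sub_le (Nat.one_le_cast.2 Fintype.card_pos) hℓa (Nat.one_le_cast.2 hb)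
    (by exact_mod_cast hbq)
end

section
/- Let E, F be finite sets, H = (h_i)_{i∈I} a finite family of functions from E to F, and suppose P_{h,e,e'}[h(e)=h(e')] = (1/#F)(1+ε), where h is uniform in H and e, e' are i.i.d. with some distribution D on E. Let u be uniform on F. Then E_h[Δ(h(e), u)] ≤ (1/2)√ε. -/
/-- Leftover hash lemma: Let `E, F` be finite sets, `H = (h_i)_{i∈I}` a
finite family of functions `E → F`, `D` a distribution on `E`, and suppose the collision
probability satisfies `P_{h,e,e'}[h(e)=h(e')] = (1/#F)(1+ε)` for `h` uniform in `H` and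
`e, e'` i.i.d. with distribution `D`. Then for `u` uniform on `F`,
`E_h[Δ(h(e),u)] ≤ (1/2)√ε`. -/
theorem stmt_14 {E F I : Type*} [Fintype E] [Fintype F] [Fintype I]
    [Nonempty F] [Nonempty I] [DecidableEq F]
    (h : I → E → F) (D : E → ℝ) (hD0 : ∀ e, 0 ≤ D e) (hD1 : ∑ e, D e = 1)
    (ε : ℝ)
    (hcol : ∑ i : I, ∑ e : E, ∑ e' : E,
        (if h i e = h i e' then (1 / (Fintype.card I : ℝ)) * D e * D e' else 0)
      = (1 / (Fintype.card F : ℝ)) * (1 + ε)) :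
    (1 / (Fintype.card I : ℝ)) *
        ∑ i : I, (1 / 2) * ∑ a : F,
          |(∑ e : E, if h i e = a then D e else 0) - 1 / (Fintype.card F : ℝ)|
      ≤ (1 / 2) * Real.sqrt ε := by
  classical
  set cI : ℝ := (Fintype.card I : ℝ) with hcIdef
  set cF : ℝ := (Fintype.card F : ℝ) with hcFdef
  have hcI : 0 < cI := by rw [hcIdef]; exact_mod_cast Fintype.card_pos
  have hcF : 0 < cF := by rw [hcFdef]; exact_mod_cast Fintype.card_pos
  set p : I → F → ℝ := fun i a => ∑ e, if h i e = a then D e else 0 with hp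
  -- each p i is a probability distribution
  have hsum1 : ∀ i, ∑ a, p i a = 1 := by
    intro i
    rw [hp]
    rw [Finset.sum_comm]
    simp [hD1]
  -- rewrite collision probability in terms of p
  have hkey : ∀ i, ∑ e : E, ∑ e' : E,
      (if h i e = h i e' then D e * D e' else 0) = ∑ a, (p i a) ^ 2 := by
    intro i
    have hsq : ∀ a : F, (p i a) ^ 2 = ∑ e : E, ∑ e' : E,
        (if h i e = a then (if h i e' = a then D e * D e' else 0) else 0) := by
      intro a
      rw [sq, hp]
      simp only [Finset.sum_mul, Finset.mul_sum]
      refine Finset.sum_congr rfl fun e _ => ?_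
      refine Finset.sum_congr rfl fun e' _ => ?_
      by_cases h1 : h i e = a <;> by_cases h2 : h i e' = a <;>
        simp [h1, h2, mul_comm]
    have pt : ∀ e e' : E, (if h i e = h i e' then D e * D e' else 0)
        = ∑ a : F, (if h i e = a then (if h i e' = a then D e * D e' else 0) else 0) := by
      intro e e'
      rw [Finset.sum_eq_single (h i e)]
      · by_cases h1 : h i e = h i e'
        · rw [if_pos h1, if_pos rfl, if_pos h1.symm]
        · rw [if_neg h1, if_pos rfl, if_neg (Ne.symm h1)]
      · intro b _ hb
        simp [Ne.symm hb]
      · simp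
    calc ∑ e : E, ∑ e' : E, (if h i e = h i e' then D e * D e' else 0)
        = ∑ e : E, ∑ e' : E, ∑ a : F,
            (if h i e = a then (if h i e' = a then D e * D e' else 0) else 0) :=
          Finset.sum_congr rfl fun e _ => Finset.sum_congr rfl fun e' _ => pt e e'
      _ = ∑ e : E, ∑ a : F, ∑ e' : E,
            (if h i e = a then (if h i e' = a then D e * D e' else 0) else 0) :=
          Finset.sum_congr rfl fun e _ => Finset.sum_comm
      _ = ∑ a : F, ∑ e : E, ∑ e' : E,
            (if h i e = a then (if h i e' = a then D e * D e' else 0) else 0) :=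
          Finset.sum_comm
      _ = ∑ a, (p i a) ^ 2 := Finset.sum_congr rfl fun a _ => (hsq a).symm
  have hcol2 : ∑ i : I, ∑ a : F, (p i a) ^ 2 = cI * (1 + ε) / cF := by
    have step : ∀ i : I, ∑ e : E, ∑ e' : E,
        (if h i e = h i e' then 1 / cI * D e * D e' else 0)
        = 1 / cI * ∑ a, (p i a) ^ 2 := by
      intro i
      rw [← hkey i, Finset.mul_sum]
      refine Finset.sum_congr rfl fun e _ => ?_
      rw [Finset.mul_sum]
      refine Finset.sum_congr rfl fun e' _ => ?_
      by_cases hc : h i e = h i e' <;> simp [hc, mul_assoc]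
    have hc2 := hcol
    rw [Finset.sum_congr rfl fun i _ => step i, ← Finset.mul_sum] at hc2
    field_simp at hc2 ⊢
    linarith [hc2]
  -- sum of squared deviations
  have hdev : ∑ i : I, ∑ a : F, (p i a - 1 / cF) ^ 2 = cI * ε / cF := by
    have : ∀ i, ∑ a : F, (p i a - 1 / cF) ^ 2
        = (∑ a, (p i a) ^ 2) - 1 / cF := by
      intro i
      have expand : ∀ a : F, (p i a - 1 / cF) ^ 2
          = (p i a) ^ 2 - 2 / cF * p i a + (1 / cF) ^ 2 := by
        intro a; ring
      rw [Finset.sum_congr rfl fun a _ => expand a]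
      rw [Finset.sum_add_distrib, Finset.sum_sub_distrib, ← Finset.mul_sum,
        hsum1 i, Finset.sum_const, Finset.card_univ, nsmul_eq_mul]
      have : (Fintype.card F : ℝ) = cF := rfl
      rw [this]
      field_simp
      ring
    rw [Finset.sum_congr rfl fun i _ => this i, Finset.sum_sub_distrib, hcol2,
      Finset.sum_const, Finset.card_univ, nsmul_eq_mul]
    have : (Fintype.card I : ℝ) = cI := rfl
    rw [this]
    field_simp
    ring
  have hε : 0 ≤ ε := by
    have h1 : 0 ≤ ∑ i : I, ∑ a : F, (p i a - 1 / cF) ^ 2 :=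
      Finset.sum_nonneg fun i _ => Finset.sum_nonneg fun a _ => sq_nonneg _
    rw [hdev] at h1
    by_contra hneg
    push_neg at hneg
    have : cI * ε / cF < 0 := div_neg_of_neg_of_pos (mul_neg_of_pos_of_neg hcI hneg) hcF
    linarith
  -- Cauchy--Schwarz over I × F
  set T : ℝ := ∑ i : I, ∑ a : F, |p i a - 1 / cF| with hT
  have hT0 : 0 ≤ T :=
    Finset.sum_nonneg fun i _ => Finset.sum_nonneg fun a _ => abs_nonneg _
  have hCS : T ^ 2 ≤ cI ^ 2 * ε := by
    have := Finset.sum_mul_sq_le_sq_mul_sq (Finset.univ : Finset (I × F))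
      (fun x => |p x.1 x.2 - 1 / cF|) (fun _ => (1 : ℝ))
    simp only [mul_one, one_pow, Finset.sum_const, Finset.card_univ, nsmul_eq_mul] at this
    rw [Fintype.sum_prod_type] at this
    rw [Fintype.sum_prod_type] at this
    have habs : ∀ (i : I) (a : F), |p i a - 1 / cF| ^ 2 = (p i a - 1 / cF) ^ 2 := by
      intro i a; exact sq_abs _
    simp only [habs] at this
    rw [hdev] at this
    have hcard : ((Fintype.card (I × F) : ℝ)) = cI * cF := by
      rw [Fintype.card_prod]; push_cast; rfl
    rw [hcard] at this
    calc T ^ 2 ≤ cI * ε / cF * (cI * cF) := this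
      _ = cI ^ 2 * ε := by field_simp
  have hTle : T ≤ cI * Real.sqrt ε := by
    have h1 : T = Real.sqrt (T ^ 2) := (Real.sqrt_sq hT0).symm
    rw [h1]
    have h2 : Real.sqrt (T ^ 2) ≤ Real.sqrt (cI ^ 2 * ε) := Real.sqrt_le_sqrt hCS
    calc Real.sqrt (T ^ 2) ≤ Real.sqrt (cI ^ 2 * ε) := h2
      _ = cI * Real.sqrt ε := by
          rw [Real.sqrt_mul (sq_nonneg _), Real.sqrt_sq hcI.le]
  -- conclude
  have hgoal : (1 / cI) * ∑ i : I, (1 / 2) * ∑ a : F, |p i a - 1 / cF|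
      = (1 / (2 * cI)) * T := by
    rw [hT, ← Finset.mul_sum]
    ring
  calc (1 / cI) * ∑ i : I, (1 / 2) * ∑ a : F, |p i a - 1 / cF|
      = (1 / (2 * cI)) * T := hgoal
    _ ≤ (1 / (2 * cI)) * (cI * Real.sqrt ε) := by
        apply mul_le_mul_of_nonneg_left hTle
        positivity
    _ = (1 / 2) * Real.sqrt ε := by field_simp
end
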